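/- Let N ≥ 2 be an integer, a ∈ ℝ, b = (a, 0) ∈ ℝ², and γ ∈ ℝ. Let φ, φ̂ : ℝ² → ℝ be twice continuously differentiable functions that are even in the second variable (φ(ξ₁, −ξ₂) = φ(ξ₁, ξ₂) and likewise for φ̂), and assume that the function ξ ↦ ∂₂(Q̃_b φ + γ T_b φ̂)(ξ) · Δφ(ξ) is integrable on ℝ². Then ∫_{ℝ²} ∂₂(Q̃_b φ + γ T_b φ̂)(ξ) · Δφ(ξ) dξ = 0. (This is the vanishing of the real part of the velocity functional B_ε evaluated at streamfunctions that are even in ξ₂, which forces the radius of the vortex polygon to be stationary at the Eulerian level.) -/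

import Mathlib

open Real MeasureTheory Finset

/-- The polygon–polygon operator `(Q̃_b f)(ξ) = ∑_{l=1}^{N-1} f(Q_l ξ + (Q_l - I) b)`,
where the plane is identified with `ℂ` and the rotation `Q_l` by angle `2πl/N` is
multiplication by `exp(2πi/N)^l`. -/
noncomputable def Qop (N : ℕ) (b : ℂ) (f : ℂ → ℝ) (ξ : ℂ) : ℝ :=
  ∑ l ∈ Finset.Ico 1 N,
    f ((Complex.exp (2 * π * Complex.I / N)) ^ l * ξ +
        ((Complex.exp (2 * π * Complex.I / N)) ^ l - 1) * b)

/-- Partial derivative in the second variable (direction `I`). -/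
noncomputable def d2 (g : ℂ → ℝ) (x : ℂ) : ℝ := fderiv ℝ g x Complex.I

/-- Laplacian `Δg = ∂₁₁g + ∂₂₂g` on the plane identified with `ℂ`. -/
noncomputable def lap (g : ℂ → ℝ) (x : ℂ) : ℝ :=
  fderiv ℝ (fun y => fderiv ℝ g y 1) x 1 +
    fderiv ℝ (fun y => fderiv ℝ g y Complex.I) x Complex.I

/-! The integrand is odd under the reflection `ξ ↦ conj ξ`: `∂₂` turns the conjugation-invariant
function `Q̃_b φ + γ T_b φ̂` into an anti-invariant one, while `Δφ` stays invariant. The invariance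
of `Q̃_b φ` comes from `conj (Q_l ξ + (Q_l - I) b) = Q_{N-l} (conj ξ) + (Q_{N-l} - I) b` for real `b`,
so conjugation only permutes the summands. As conjugation preserves Lebesgue measure, the
integral equals its own negative. -/

section FderivSymmetry

variable {E F : Type*} [NormedAddCommGroup E] [NormedSpace ℝ E] [NormedAddCommGroup F]
  [NormedSpace ℝ F] {f : E → F}

theorem fderiv_map_apply_map_of_invariant (L : E ≃L[ℝ] E) (hf : ∀ x, f (L x) = f x) (x v : E) :
    fderiv ℝ f (L x) (L v) = fderiv ℝ f x v := by
  conv_rhs => rw [← funext hf]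
  rw [← Function.comp_def, L.comp_right_fderiv]
  rfl

theorem fderiv_map_apply_map_of_anti_invariant (L : E ≃L[ℝ] E) (hf : ∀ x, f (L x) = -f x)
    (x v : E) : fderiv ℝ f (L x) (L v) = -fderiv ℝ f x v := by
  have hcomp : f ∘ L = -f := funext hf
  rw [← neg_apply, ← fderiv_neg, ← hcomp, L.comp_right_fderiv]
  rfl

end FderivSymmetry

section Conjugation

open ComplexConjugate

variable {f : ℂ → ℝ}

theorem fderiv_conj_apply_of_conj_invariant (hf : ∀ ξ, f (conj ξ) = f ξ) (x v : ℂ) :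
    fderiv ℝ f (conj x) (conj v) = fderiv ℝ f x v :=
  fderiv_map_apply_map_of_invariant Complex.conjCLE hf x v

theorem fderiv_conj_apply_of_conj_anti_invariant (hf : ∀ ξ, f (conj ξ) = -f ξ) (x v : ℂ) :
    fderiv ℝ f (conj x) (conj v) = -fderiv ℝ f x v :=
  fderiv_map_apply_map_of_anti_invariant Complex.conjCLE hf x v

theorem d2_conj_of_conj_invariant (hf : ∀ ξ, f (conj ξ) = f ξ) (x : ℂ) :
    d2 f (conj x) = -d2 f x := by
  have h := fderiv_conj_apply_of_conj_invariant hf x (-Complex.I)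
  rw [map_neg, Complex.conj_I, neg_neg, map_neg] at h
  exact h

theorem lap_conj_of_conj_invariant (hf : ∀ ξ, f (conj ξ) = f ξ) (x : ℂ) :
    lap f (conj x) = lap f x := by
  have h₁ : ∀ y, fderiv ℝ f (conj y) 1 = fderiv ℝ f y 1 := fun y => by
    simpa using fderiv_conj_apply_of_conj_invariant hf y 1
  have h₁₁ := fderiv_conj_apply_of_conj_invariant (f := fun y => fderiv ℝ f y 1) h₁ x 1
  have h₂₂ := fderiv_conj_apply_of_conj_anti_invariant (d2_conj_of_conj_invariant hf) x
    (-Complex.I)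
  rw [map_one] at h₁₁
  rw [map_neg, Complex.conj_I, neg_neg, map_neg, neg_neg] at h₂₂
  exact congrArg₂ (· + ·) h₁₁ h₂₂

theorem conj_pow_eq_pow_sub {ζ : ℂ} {N l : ℕ} (hζ : ζ ^ N = 1) (hl : l < N) :
    conj (ζ ^ l) = ζ ^ (N - l) := by
  have hζl : ‖ζ ^ l‖ = 1 := by
    rw [norm_pow, Complex.norm_eq_one_of_pow_eq_one hζ (by omega), one_pow]
  rw [← Complex.inv_eq_conj hζl]
  exact inv_eq_of_mul_eq_one_left (by rw [← pow_add, Nat.sub_add_cancel hl.le, hζ])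

theorem Qop_conj_of_conj_invariant (N : ℕ) (a : ℝ) (hf : ∀ ξ, f (conj ξ) = f ξ) (ξ : ℂ) :
    Qop N a f (conj ξ) = Qop N a f ξ := by
  unfold Qop
  set ω := Complex.exp (2 * π * Complex.I / N)
  have hconj : ∀ l ∈ Ico 1 N, conj (ω ^ l) = ω ^ (N - l) := fun l hl => by
    obtain ⟨-, hlN⟩ := mem_Ico.mp hl
    exact conj_pow_eq_pow_sub ((Complex.isPrimitiveRoot_exp N (by omega)).pow_eq_one) hlN
  refine sum_nbij' (N - ·) (N - ·) ?_ ?_ ?_ ?_ fun l hl => ?_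
  iterate 4 (intro l hl; simp only [mem_Ico] at hl ⊢; omega)
  rw [← hf, map_add, map_mul, map_mul, map_sub, map_one, Complex.conj_ofReal, Complex.conj_conj,
    hconj l hl]

end Conjugation

theorem integral_eq_zero_of_anti_invariant {α E : Type*} [MeasurableSpace α] {μ : Measure α}
    [NormedAddCommGroup E] [NormedSpace ℝ E] {e : α → α} (he : MeasurePreserving e μ μ)
    (he' : MeasurableEmbedding e) {F : α → E} (hF : ∀ x, F (e x) = -F x) :
    ∫ x, F x ∂μ = 0 := by
  have : IsAddTorsionFree E := .of_isTorsionFree ℝ E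
  simp_rw [← self_eq_neg, ← integral_neg, ← hF, he.integral_comp he']

theorem real_part_of_velocity_functional_vanishes_general
    (N : ℕ) (a γ : ℝ) (φ φh : ℂ → ℝ)
    (heφ : ∀ ξ : ℂ, φ ((starRingEnd ℂ) ξ) = φ ξ)
    (heφh : ∀ ξ : ℂ, φh ((starRingEnd ℂ) ξ) = φh ξ) :
    ∫ ξ : ℂ, d2 (fun η => Qop N (a : ℂ) φ η + γ * φh (η + (a : ℂ))) ξ * lap φ ξ = 0 := by
  have hinv : ∀ ξ, Qop N a φ ((starRingEnd ℂ) ξ) + γ * φh ((starRingEnd ℂ) ξ + a)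
      = Qop N a φ ξ + γ * φh (ξ + a) := fun ξ => by
    rw [Qop_conj_of_conj_invariant N a heφ, ← heφh, map_add, Complex.conj_conj,
      Complex.conj_ofReal]
  refine integral_eq_zero_of_anti_invariant Complex.conjLIE.measurePreserving
    Complex.conjLIE.toHomeomorph.measurableEmbedding fun ξ => ?_
  rw [Complex.conjLIE_apply, d2_conj_of_conj_invariant hinv, lap_conj_of_conj_invariant heφ,
    neg_mul]

/-- For `b = (a, 0)` and streamfunctions `φ, φ̂` of class `C²` that are even in the second
variable (invariant under conjugation), the real part of the velocity functional vanishes: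
`∫ ∂₂(Q̃_b φ + γ T_b φ̂) Δφ = 0`. -/
theorem real_part_of_velocity_functional_vanishes
    (N : ℕ) (hN : 2 ≤ N) (a γ : ℝ) (φ φh : ℂ → ℝ)
    (hφ : ContDiff ℝ 2 φ) (hφh : ContDiff ℝ 2 φh)
    (heφ : ∀ ξ : ℂ, φ ((starRingEnd ℂ) ξ) = φ ξ)
    (heφh : ∀ ξ : ℂ, φh ((starRingEnd ℂ) ξ) = φh ξ)
    (hint : Integrable (fun ξ : ℂ =>
      d2 (fun η => Qop N (a : ℂ) φ η + γ * φh (η + (a : ℂ))) ξ * lap φ ξ)) :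
    ∫ ξ : ℂ, d2 (fun η => Qop N (a : ℂ) φ η + γ * φh (η + (a : ℂ))) ξ * lap φ ξ = 0 :=
  real_part_of_velocity_functional_vanishes_general N a γ φ φh heφ heφh
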